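/- Let n ∈ ℕ, S = {0, 1, …, 2^n − 1}, and p ∈ (0,1]. Let P be the probability distribution on S×S×S given by P(x,y,z) = p·2^{−n}·[x = y = z] + (1−p)·2^{−2n}·[x = (y+z) mod 2^n] (i.e., with probability p set X uniform and Y = Z = X, and with probability 1−p set Y, Z independent uniform and X = (Y+Z) mod 2^n). Then I(X:Z|Y)_P ≥ (1−p)·n − h(p), where h(p) = −p log p − (1−p) log(1−p) is the binary entropy function. -/

import Mathlib

noncomputable section

namespace CIT

/-- A probability distribution on a finite set. -/
def IsDist {X : Type*} [Fintype X] (p : X → ℝ) : Prop :=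
  (∀ x, 0 ≤ p x) ∧ ∑ x, p x = 1

/-- Support inclusion `supp p ⊆ supp q`. -/
def suppLe {X : Type*} (p q : X → ℝ) : Prop := ∀ x, p x ≠ 0 → q x ≠ 0

open Classical in
/-- Relative entropy (base 2), with `0·log 0 = 0`, `+∞` if the support
condition fails. -/
def relEnt {X : Type*} [Fintype X] (p q : X → ℝ) : EReal :=
  if suppLe p q then ((∑ x, p x * Real.logb 2 (p x / q x) : ℝ) : EReal) else ⊤

open Classical in
/-- Max-relative entropy `D_max(p‖q) = log max_{x ∈ supp p} p(x)/q(x)`,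
`+∞` if the support condition fails. -/
def dMax {X : Type*} [Fintype X] (p q : X → ℝ) : EReal :=
  if suppLe p q then
    ((Real.logb 2 (sSup {r : ℝ | ∃ x, p x ≠ 0 ∧ r = p x / q x}) : ℝ) : EReal)
  else ⊤

open Classical in
/-- Rényi relative entropy of order `α` (base 2), with `D_1 := D` and `+∞`
when `α > 1` and the support condition fails. -/
def renyi {X : Type*} [Fintype X] (α : ℝ) (p q : X → ℝ) : EReal :=
  if α = 1 then relEnt p q
  else if 1 < α ∧ ¬ suppLe p q then ⊤
  else (((α - 1)⁻¹ * Real.logb 2 (∑ x, p x ^ α * q x ^ (1 - α)) : ℝ) : EReal)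

/-- The `XY`-marginal of a tripartite distribution. -/
def margXY {X Y Z : Type*} [Fintype Z] (P : X × Y × Z → ℝ) : X × Y → ℝ :=
  fun t => ∑ z, P (t.1, t.2, z)

/-- The `YZ`-marginal of a tripartite distribution. -/
def margYZ {X Y Z : Type*} [Fintype X] (P : X × Y × Z → ℝ) : Y × Z → ℝ :=
  fun t => ∑ x, P (x, t.1, t.2)

/-- The `Y`-marginal of a tripartite distribution. -/
def margY {X Y Z : Type*} [Fintype X] [Fintype Z] (P : X × Y × Z → ℝ) : Y → ℝ :=
  fun y => ∑ x, ∑ z, P (x, y, z)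

/-- Conditional mutual information
`I(X:Z|Y)_P = Σ P(x,y,z) log( P(x,y,z)·P_Y(y) / (P_XY(x,y)·P_YZ(y,z)) )`. -/
def cmi {X Y Z : Type*} [Fintype X] [Fintype Y] [Fintype Z] (P : X × Y × Z → ℝ) : ℝ :=
  ∑ s : X × Y × Z,
    P s * Real.logb 2 (P s * margY P s.2.1 / (margXY P (s.1, s.2.1) * margYZ P (s.2.1, s.2.2)))

/-- A classical channel from `Y` to `W`: a family of conditional distributions. -/
def IsChannel {Y W : Type*} [Fintype W] (R : Y → W → ℝ) : Prop :=
  ∀ y, (∀ w, 0 ≤ R y w) ∧ ∑ w, R y w = 1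

/-- Action `(id ⊗ R)` of a channel `R : Y → W` on a joint distribution on `X × Y`. -/
def applyChan {X Y W : Type*} [Fintype Y] (R : Y → W → ℝ) (P : X × Y → ℝ) : X × W → ℝ :=
  fun t => ∑ y, P (t.1, y) * R y t.2

/-- Action of a channel `R : Y → W` on a distribution on `Y`. -/
def chanOnDist {Y W : Type*} [Fintype Y] (R : Y → W → ℝ) (q : Y → ℝ) : W → ℝ :=
  fun w => ∑ y, q y * R y w

/-- Marginal channel `R_{Y→Y}(y'|y) = Σ_{z'} R(y',z'|y)`. -/
def margChan {Y Y' Z' : Type*} [Fintype Z'] (R : Y → Y' × Z' → ℝ) : Y → Y' → ℝ :=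
  fun y y' => ∑ z', R y (y', z')

end CIT

/-!
Put `N = 2 ^ n`. The distribution is `a·[x = y = z] + b·[x = y + z]` with `a = p/N` and
`b = (1 - p)/N²`, which makes sense over any finite abelian group. Its marginals are
`P_XY(x, y) = a·[x = y] + b`, `P_YZ(y, z) = a·[y = z] + b` and `P_Y = a + N b`, so, the CMI being
linear in the weights `P s`, it splits into `a` times a sum of log-ratios over the diagonal plus `b`
times a sum over the graph of addition. Each log-ratio takes at most three values, which gives
`I(X:Z|Y)` in closed form. After substituting `a` and `b`, the closed form minus `(1 - p) n - h(p)`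
is a sum of three nonnegative terms; the only inequality needed is convexity of `x log x` at
`m = (1 - p)·1 + p·N`, i.e. `m log m ≤ p N log N`.
-/

namespace Real

theorem convexOn_mul_logb {β : ℝ} (hβ : 1 < β) :
    ConvexOn ℝ (Set.Ici 0) (fun x => x * logb β x) := by
  have h : (fun x => x * logb β x) = fun x => (log β)⁻¹ • (x * log x) := by
    ext x
    rw [smul_eq_mul, logb]
    ring
  rw [h]
  exact convexOn_mul_log.smul (inv_nonneg.mpr (log_pos hβ).le)

end Real

open Finset in
theorem Fintype.sum_ite_eq_const {ι R : Type*} [Fintype ι] [DecidableEq ι] [CommRing R]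
    (c : ι) (A B : R) :
    ∑ i, (if i = c then A else B) = A + (Fintype.card ι - 1) * B := by
  have h : ∀ i, (if i = c then A else B) = (if i = c then A - B else 0) + B := by
    intro i; split_ifs <;> ring
  simp only [h, sum_add_distrib, sum_ite_eq', sum_const, card_univ, nsmul_eq_mul]
  ring

namespace CIT

open Finset Real

def cmiLogRatio {X Y Z : Type*} [Fintype X] [Fintype Z] (P : X × Y × Z → ℝ) (s : X × Y × Z) : ℝ :=
  logb 2 (P s * margY P s.2.1 / (margXY P (s.1, s.2.1) * margYZ P (s.2.1, s.2.2)))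

section DiagAddMix

variable {K : Type*} [AddCommGroup K] [DecidableEq K]

def diagAddMix (a b : ℝ) (s : K × K × K) : ℝ :=
  a * (if s.1 = s.2.1 ∧ s.2.1 = s.2.2 then 1 else 0) + b * (if s.1 = s.2.1 + s.2.2 then 1 else 0)

variable {a b : ℝ}

theorem diagAddMix_diag (y : K) : diagAddMix a b (y, y, y) = if y = 0 then a + b else a := by
  by_cases hy : y = 0 <;> simp [diagAddMix, hy]

theorem diagAddMix_graph (y z : K) :
    diagAddMix a b (y + z, y, z) = if (y, z) = 0 then a + b else b := by
  by_cases hz : z = 0 <;> by_cases hy : y = z <;> simp_all [diagAddMix]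

theorem margXY_diagAddMix [Fintype K] (x y : K) :
    margXY (diagAddMix a b) (x, y) = if x = y then a + b else b := by
  have hsolve : ∀ z, x = y + z ↔ z = x - y := fun z => by rw [eq_sub_iff_add_eq', eq_comm]
  by_cases h : x = y <;> simp [margXY, diagAddMix, sum_add_distrib, h, hsolve]

theorem margYZ_diagAddMix [Fintype K] (y z : K) :
    margYZ (diagAddMix a b) (y, z) = if y = z then a + b else b := by
  by_cases h : y = z <;> simp [margYZ, diagAddMix, sum_add_distrib, h]

theorem margY_diagAddMix [Fintype K] (y : K) :
    margY (diagAddMix a b) y = a + Fintype.card K * b := by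
  change ∑ x, margXY (diagAddMix a b) (x, y) = _
  simp only [margXY_diagAddMix, Fintype.sum_ite_eq_const]
  ring

theorem cmi_diagAddMix_eq_diag_add_graph [Fintype K] :
    cmi (diagAddMix (K := K) a b) = a * ∑ y : K, cmiLogRatio (diagAddMix a b) (y, y, y) +
      b * ∑ y : K, ∑ z : K, cmiLogRatio (diagAddMix a b) (y + z, y, z) := by
  change ∑ s, diagAddMix a b s * cmiLogRatio (diagAddMix a b) s = _
  set L := cmiLogRatio (diagAddMix (K := K) a b)
  simp only [diagAddMix, add_mul, sum_add_distrib, mul_assoc, ← mul_sum, Fintype.sum_prod_type,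
    ite_mul, one_mul, zero_mul]
  congr 2
  · rw [sum_comm]
    refine sum_congr rfl fun y _ => ?_
    rw [Fintype.sum_eq_single y fun x hx => by simp [hx]]
    simp
  · rw [sum_comm]
    refine sum_congr rfl fun y _ => ?_
    rw [sum_comm]
    simp

theorem sum_cmiLogRatio_diagAddMix_diag [Fintype K] (ha : 0 < a) (hb : 0 ≤ b) :
    ∑ y : K, cmiLogRatio (diagAddMix a b) (y, y, y) =
      (1 - 2 * Fintype.card K) * logb 2 (a + b) + (Fintype.card K - 1) * logb 2 a +
        Fintype.card K * logb 2 (a + Fintype.card K * b) := by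
  have hL : ∀ y : K, cmiLogRatio (diagAddMix a b) (y, y, y) =
      logb 2 (if y = 0 then a + b else a) + logb 2 (a + Fintype.card K * b) -
        2 * logb 2 (a + b) := by
    intro y
    have hy : (if y = 0 then a + b else a) ≠ 0 := by split_ifs <;> positivity
    simp only [cmiLogRatio, diagAddMix_diag, margY_diagAddMix, margXY_diagAddMix,
      margYZ_diagAddMix, ↓reduceIte]
    rw [logb_div (mul_ne_zero hy (by positivity)) (by positivity), logb_mul hy (by positivity),
      logb_mul (by positivity) (by positivity)]
    ring
  simp only [hL, sum_add_distrib, sum_sub_distrib, apply_ite (logb 2), Fintype.sum_ite_eq_const,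
    sum_const, card_univ, nsmul_eq_mul]
  ring

theorem sum_cmiLogRatio_diagAddMix_graph [Fintype K] (ha : 0 < a) (hb : 0 < b) :
    ∑ y : K, ∑ z : K, cmiLogRatio (diagAddMix a b) (y + z, y, z) =
      (1 - 2 * Fintype.card K) * logb 2 (a + b) +
        Fintype.card K ^ 2 * logb 2 (a + Fintype.card K * b) -
          (Fintype.card K - 1) ^ 2 * logb 2 b := by
  have hite : ∀ c : Prop, [Decidable c] → (if c then a + b else b) ≠ 0 := by
    intro c _; split_ifs <;> positivity
  have hL : ∀ y z : K, cmiLogRatio (diagAddMix a b) (y + z, y, z) =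
      logb 2 (if (y, z) = 0 then a + b else b) + logb 2 (a + Fintype.card K * b) -
        logb 2 (if z = 0 then a + b else b) - logb 2 (if z = y then a + b else b) := by
    intro y z
    simp only [cmiLogRatio, diagAddMix_graph, margY_diagAddMix, margXY_diagAddMix,
      margYZ_diagAddMix, add_eq_left, @eq_comm _ y z]
    rw [logb_div (mul_ne_zero (hite _) (by positivity)) (mul_ne_zero (hite _) (hite _)),
      logb_mul (hite _) (by positivity), logb_mul (hite _) (hite _)]
    ring
  have hpair : ∑ y : K, ∑ z : K, logb 2 (if (y, z) = 0 then a + b else b) =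
      logb 2 (a + b) + (Fintype.card K ^ 2 - 1) * logb 2 b := by
    rw [← Fintype.sum_prod_type' (fun y z => logb 2 (if (y, z) = 0 then a + b else b))]
    simp only [Prod.mk.eta, apply_ite (logb 2), Fintype.sum_ite_eq_const, Fintype.card_prod]
    push_cast
    ring
  simp only [hL, sum_add_distrib, sum_sub_distrib, hpair]
  simp only [apply_ite (logb 2), Fintype.sum_ite_eq_const, sum_const, card_univ, nsmul_eq_mul]
  ring

def diagAddMixCmi (N a b : ℝ) : ℝ :=
  a * ((1 - 2 * N) * logb 2 (a + b) + (N - 1) * logb 2 a + N * logb 2 (a + N * b)) +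
    b * ((1 - 2 * N) * logb 2 (a + b) + N ^ 2 * logb 2 (a + N * b) - (N - 1) ^ 2 * logb 2 b)

theorem cmi_diagAddMix [Fintype K] (ha : 0 < a) (hb : 0 ≤ b) :
    cmi (diagAddMix (K := K) a b) = diagAddMixCmi (Fintype.card K) a b := by
  rw [cmi_diagAddMix_eq_diag_add_graph, sum_cmiLogRatio_diagAddMix_diag ha hb, diagAddMixCmi]
  rcases hb.eq_or_lt with rfl | hb
  · simp
  · rw [sum_cmiLogRatio_diagAddMix_graph ha hb]

end DiagAddMix

theorem diagAddMixCmi_lower_bound {N p : ℝ} (hN : 1 ≤ N) (hp0 : 0 < p) (hp1 : p ≤ 1) :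
    (1 - p) * logb 2 N - (-(p * logb 2 p) - (1 - p) * logb 2 (1 - p)) ≤
      diagAddMixCmi N (p * N⁻¹) ((1 - p) * N⁻¹ ^ 2) := by
  rcases hp1.eq_or_lt with rfl | hp1
  · have hcmi : diagAddMixCmi N N⁻¹ 0 = 0 := by
      simp only [diagAddMixCmi, mul_zero, add_zero, zero_mul]
      ring
    simp [hcmi]
  have hN0 : 0 < N := by linarith
  have hq : 0 < 1 - p := by linarith
  set m := p * N + (1 - p) with hm
  have hm0 : 0 < m := by positivity
  have hconv : m * logb 2 m ≤ p * N * logb 2 N := by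
    have h := (Real.convexOn_mul_logb one_lt_two).2 (Set.mem_Ici.mpr zero_le_one)
      (Set.mem_Ici.mpr hN0.le) hq.le hp0.le (sub_add_cancel 1 p)
    simp only [smul_eq_mul, mul_one, logb_one, mul_zero, zero_add] at h
    rwa [add_comm, ← hm, ← mul_assoc] at h
  have hsum : p * N⁻¹ + (1 - p) * N⁻¹ ^ 2 = m * N⁻¹ ^ 2 := by
    rw [hm]; field_simp
  have hmarg : p * N⁻¹ + N * ((1 - p) * N⁻¹ ^ 2) = N⁻¹ := by
    field_simp; ring
  have hlogInv : logb 2 N⁻¹ = -logb 2 N := logb_inv 2 N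
  rw [diagAddMixCmi, hsum, hmarg, logb_mul hm0.ne' (by positivity), logb_mul hp0.ne' (by positivity),
    logb_mul hq.ne' (by positivity), logb_pow, hlogInv]
  set ℓ := logb 2 N
  -- the closed form minus the bound is exactly the right-hand side of `hexcess`
  have hexcess : 0 ≤ (2 * N - 1) / N ^ 2 * (p * N * ℓ - m * logb 2 m) + p * (-logb 2 p) / N +
      (1 - p) * (-logb 2 (1 - p)) * ((N - 1) ^ 2 / N ^ 2 + 1) := by
    have hlp : logb 2 p ≤ 0 := logb_nonpos one_lt_two hp0.le hp1.le
    have hlq : logb 2 (1 - p) ≤ 0 := logb_nonpos one_lt_two hq.le (by linarith)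
    have h2N : 0 ≤ 2 * N - 1 := by linarith
    have hc : 0 ≤ p * N * ℓ - m * logb 2 m := by linarith
    have hlp' : 0 ≤ -logb 2 p := by linarith
    have hlq' : 0 ≤ -logb 2 (1 - p) := by linarith
    positivity
  rw [hm] at hexcess ⊢
  field_simp at hexcess ⊢
  push_cast
  linarith [hexcess]

end CIT

open CIT in
/-- for the distribution
`P(x,y,z) = p·2^{−n}·[x=y=z] + (1−p)·2^{−2n}·[x=(y+z) mod 2^n]` one has
`I(X:Z|Y)_P ≥ (1−p)n − h(p)`. -/
theorem cmi_lower_bound_mod_example (n : ℕ) (p : ℝ) (hp0 : 0 < p) (hp1 : p ≤ 1)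
    (P : Fin (2 ^ n) × Fin (2 ^ n) × Fin (2 ^ n) → ℝ)
    (hP : P = fun s =>
      p * ((2 ^ n : ℕ) : ℝ)⁻¹ * (if s.1 = s.2.1 ∧ s.2.1 = s.2.2 then 1 else 0) +
        (1 - p) * (((2 ^ n : ℕ) : ℝ)⁻¹) ^ 2 *
          (if s.1.val = (s.2.1.val + s.2.2.val) % 2 ^ n then 1 else 0)) :
    (1 - p) * (n : ℝ) - (-(p * Real.logb 2 p) - (1 - p) * Real.logb 2 (1 - p)) ≤ cmi P := by
  have : NeZero (2 ^ n) := ⟨by positivity⟩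
  set N : ℝ := ((2 ^ n : ℕ) : ℝ)
  have hN : 1 ≤ N := Nat.one_le_cast.mpr Nat.one_le_two_pow
  have hadd : ∀ x y z : Fin (2 ^ n), x = y + z ↔ x.val = (y.val + z.val) % 2 ^ n := by
    intro x y z
    rw [Fin.ext_iff, Fin.val_add]
  have hmix : P = diagAddMix (p * N⁻¹) ((1 - p) * N⁻¹ ^ 2) := by
    rw [hP]
    ext s
    simp only [diagAddMix, hadd]
  have hn : (n : ℝ) = Real.logb 2 N := by
    rw [show N = 2 ^ n by simp [N], Real.logb_pow, Real.logb_self_eq_one one_lt_two, mul_one]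
  rw [hmix, cmi_diagAddMix (by positivity) (mul_nonneg (by linarith) (by positivity)),
    Fintype.card_fin, hn]
  exact diagAddMixCmi_lower_bound hN hp0 hp1
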